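/- arXiv:1612.07405 — 2 statements merged into one kernel-verified Lean document; each statement's English description precedes it below -/
import Mathlib

section
/- For every c ∈ (1, 2], it holds that H((1 − p₁(c))/2) < 0.9, where p₁(c) = erf(c/√2) − √(2/π)·(1/c)·(1 − exp(−c²/2)). -/
/-! The derivative of `p₁` is `√(2/π) (1 - e^{-c²/2}) / c²`, so `p₁` is increasing on `(0, ∞)` and
`p₁(c) > p₁(1) ≈ 0.368746` on `(1, 2]`. Hence `(1 - p₁(c))/2 < 0.31563`, and since the binary
entropy increases on `[0, 1/2]`, `H((1 - p₁(c))/2) < H(0.31563) ≈ 0.89957`. The margin at `c = 1` is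
only about `4·10⁻⁴`, so `erf(1/√2)` and `e^{-1/2}` are bounded by Taylor polynomials with explicit
remainder, and the logarithms in `H(0.31563)` by partial sums of `-log (1 - u) = ∑ uᵏ/k`. -/

open Real

/-- The Gauss error function: erf(x) = (2/√π)·∫₀^x exp(−t²) dt. -/
noncomputable def erf (x : ℝ) : ℝ :=
  (2 / Real.sqrt π) * ∫ t in (0:ℝ)..x, Real.exp (-t ^ 2)

/-- The binary entropy function (base-2 logarithm), with `H(0) = H(1) = 0`
by the convention `logb 2 0 = 0`. -/
noncomputable def binH (x : ℝ) : ℝ :=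
  -x * Real.logb 2 x - (1 - x) * Real.logb 2 (1 - x)

open Set Finset
open scoped Nat

noncomputable def p1 (c : ℝ) : ℝ :=
  erf (c / √2) - √(2 / π) * (1 / c) * (1 - exp (-c ^ 2 / 2))

lemma hasDerivAt_erf (x : ℝ) : HasDerivAt erf (2 / √π * exp (-x ^ 2)) x := by
  have hcont : Continuous fun t : ℝ => exp (-t ^ 2) := by fun_prop
  exact (intervalIntegral.integral_hasDerivAt_right (hcont.intervalIntegrable _ _)
    hcont.aestronglyMeasurable.stronglyMeasurableAtFilter hcont.continuousAt).const_mul _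

lemma two_div_sqrt_pi_mul_inv_sqrt_two : 2 / √π * (1 / √2) = √(2 / π) := by
  rw [sqrt_div zero_le_two, div_mul_div_comm, mul_one, mul_comm, ← div_div, div_sqrt]

lemma hasDerivAt_p1 {c : ℝ} (hc : c ≠ 0) :
    HasDerivAt p1 (√(2 / π) * ((1 - exp (-c ^ 2 / 2)) / c ^ 2)) c := by
  have herf : HasDerivAt (fun c => erf (c / √2)) (√(2 / π) * exp (-c ^ 2 / 2)) c := by
    refine ((hasDerivAt_erf (c / √2)).comp c ((hasDerivAt_id c).div_const √2)).congr_deriv ?_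
    rw [div_pow, sq_sqrt zero_le_two, ← two_div_sqrt_pi_mul_inv_sqrt_two]
    ring_nf
  have hgauss : HasDerivAt (fun c => 1 - exp (-c ^ 2 / 2)) (c * exp (-c ^ 2 / 2)) c := by
    refine (((hasDerivAt_pow 2 c).neg.div_const 2).exp.const_sub 1).congr_deriv ?_
    simp only [Pi.neg_apply, Nat.cast_ofNat]
    ring
  have hfun : p1 = fun x => erf (x / √2) - √(2 / π) * x⁻¹ * (1 - exp (-x ^ 2 / 2)) := by
    funext x
    rw [p1, one_div]
  rw [hfun]
  -- the Gaussian terms of the two summands cancel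
  refine (herf.sub (((hasDerivAt_inv hc).const_mul √(2 / π)).mul hgauss)).congr_deriv ?_
  field_simp
  ring

lemma p1_strictMonoOn : StrictMonoOn p1 (Ioi 0) := by
  refine strictMonoOn_of_hasDerivWithinAt_pos (convex_Ioi 0)
    (fun x hx => (hasDerivAt_p1 (ne_of_gt hx)).continuousAt.continuousWithinAt)
    (fun x hx => (hasDerivAt_p1 (ne_of_gt (interior_subset hx))).hasDerivWithinAt) ?_
  intro x hx
  rw [interior_Ioi] at hx
  have hexp : exp (-x ^ 2 / 2) < 1 := exp_lt_one_iff.2 (by nlinarith [mem_Ioi.1 hx])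
  have hgap : 0 < 1 - exp (-x ^ 2 / 2) := by linarith
  have hx0 : x ≠ 0 := ne_of_gt hx
  positivity

lemma exp_neg_sq_ge {n : ℕ} (hn : 0 < n) {t : ℝ} (ht : t ^ 2 ≤ 1) :
    ∑ i ∈ range n, (-1) ^ i / i ! * t ^ (2 * i) - (n + 1) / (n ! * n) * t ^ (2 * n)
      ≤ exp (-t ^ 2) := by
  have habs : |-t ^ 2| = t ^ 2 := by rw [abs_neg, abs_of_nonneg (sq_nonneg t)]
  have h := (abs_le.1 (exp_bound (habs.trans_le ht) hn)).1
  have hsum : ∑ i ∈ range n, (-t ^ 2) ^ i / i ! = ∑ i ∈ range n, (-1) ^ i / i ! * t ^ (2 * i) :=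
    sum_congr rfl fun i _ => by rw [neg_pow, pow_mul]; ring
  rw [habs, hsum, ← pow_mul] at h
  push_cast at h
  linarith

lemma integral_exp_neg_sq_ge {n : ℕ} (hn : 0 < n) {x : ℝ} (hx0 : 0 ≤ x) (hx : x ^ 2 ≤ 1) :
    ∑ i ∈ range n, (-1) ^ i / (i ! * (2 * i + 1)) * x ^ (2 * i + 1)
        - (n + 1) / (n ! * n * (2 * n + 1)) * x ^ (2 * n + 1)
      ≤ ∫ t in (0:ℝ)..x, exp (-t ^ 2) := by
  have hpoly : ∫ t in (0:ℝ)..x,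
      (∑ i ∈ range n, (-1) ^ i / i ! * t ^ (2 * i) - (n + 1) / (n ! * n) * t ^ (2 * n)) =
      ∑ i ∈ range n, (-1) ^ i / (i ! * (2 * i + 1)) * x ^ (2 * i + 1)
        - (n + 1) / (n ! * n * (2 * n + 1)) * x ^ (2 * n + 1) := by
    rw [intervalIntegral.integral_sub (Continuous.intervalIntegrable (by fun_prop) _ _)
        (Continuous.intervalIntegrable (by fun_prop) _ _),
      intervalIntegral.integral_finsetSum
        fun i _ => Continuous.intervalIntegrable (by fun_prop) _ _]
    simp only [intervalIntegral.integral_const_mul, integral_pow,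
      zero_pow (Nat.succ_ne_zero _), sub_zero, Nat.cast_mul, Nat.cast_ofNat, div_eq_mul_inv,
      mul_inv]
    congr 1
    · exact sum_congr rfl fun i _ => by ring
    · ring
  rw [← hpoly]
  refine intervalIntegral.integral_mono_on hx0 (Continuous.intervalIntegrable (by fun_prop) _ _)
    (Continuous.intervalIntegrable (by fun_prop) _ _) fun t ht => exp_neg_sq_ge hn ?_
  nlinarith [ht.1, ht.2]

lemma erf_ge {n : ℕ} (hn : 0 < n) {x : ℝ} (hx0 : 0 ≤ x) (hx : x ^ 2 ≤ 1) :
    2 / √π * (∑ i ∈ range n, (-1) ^ i / (i ! * (2 * i + 1)) * x ^ (2 * i + 1)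
        - (n + 1) / (n ! * n * (2 * n + 1)) * x ^ (2 * n + 1)) ≤ erf x :=
  mul_le_mul_of_nonneg_left (integral_exp_neg_sq_ge hn hx0 hx) (by positivity)

-- `236798621 / 276756480` is the bracket of `erf_ge` at `n = 6`, `x = 1/√2`, divided by `x`.
lemma sqrt_two_div_pi_mul_le_erf_inv_sqrt_two :
    √(2 / π) * (236798621 / 276756480) ≤ erf (1 / √2) := by
  have hx2 : (1 / √2 : ℝ) ^ 2 = 1 / 2 := by rw [div_pow, sq_sqrt zero_le_two, one_pow]
  have h := erf_ge (n := 6) (by norm_num) (by positivity) (hx2.trans_le (by norm_num))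
  simp only [pow_succ _ (2 * _), pow_mul, hx2] at h
  norm_num [sum_range_succ, Nat.factorial] at h
  rw [← two_div_sqrt_pi_mul_inv_sqrt_two, one_div]
  convert h using 1
  ring

lemma exp_neg_half_gt : (0.6065303 : ℝ) < exp (-(1 / 2)) := by
  have h := (abs_le.1 (exp_bound (x := -(1 / 2)) (by norm_num [abs_of_pos]) (n := 7)
    (by norm_num))).1
  norm_num [sum_range_succ, Nat.factorial, abs_of_pos] at h
  linarith

lemma sqrt_two_div_pi_gt : (0.797884 : ℝ) < √(2 / π) := by
  rw [lt_sqrt (by norm_num), lt_div_iff₀ pi_pos]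
  nlinarith [pi_lt_d6]

lemma p1_one_gt : (0.36874 : ℝ) < p1 1 := by
  have herf := sqrt_two_div_pi_mul_le_erf_inv_sqrt_two
  have hexp := exp_neg_half_gt
  have hsqrt := sqrt_two_div_pi_gt
  have hp1 : p1 1 = erf (1 / √2) - √(2 / π) * (1 - exp (-(1 / 2))) := by norm_num [p1]
  rw [hp1]
  nlinarith

lemma sum_range_pow_div_le_neg_log_one_sub {u : ℝ} (hu0 : 0 ≤ u) (hu1 : u < 1) (n : ℕ) :
    ∑ i ∈ range n, u ^ (i + 1) / (i + 1) ≤ -log (1 - u) :=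
  sum_le_hasSum _ (fun i _ => by positivity)
    (hasSum_pow_div_log_of_abs_lt_one (by rwa [abs_of_nonneg hu0]))

lemma binEntropy_lt_nine_tenths_mul_log_two : binEntropy 0.31563 < 0.9 * log 2 := by
  have hA : (0.23310 : ℝ) ≤ -log (1 - 6563 / 31563) :=
    le_trans (by norm_num [sum_range_succ])
      (sum_range_pow_div_le_neg_log_one_sub (by norm_num) (by norm_num) 9)
  have hB : (0.31388 : ℝ) ≤ -log (1 - 18437 / 68437) :=
    le_trans (by norm_num [sum_range_succ])
      (sum_range_pow_div_le_neg_log_one_sub (by norm_num) (by norm_num) 9)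
  have hlogA : log (0.31563 : ℝ)⁻¹ = 2 * log 2 + log (1 - 6563 / 31563) := by
    rw [show (0.31563 : ℝ)⁻¹ = 2 ^ 2 * (1 - 6563 / 31563) by norm_num,
      log_mul (by norm_num) (by norm_num), log_pow, Nat.cast_ofNat]
  have hlogB : log (1 - 0.31563 : ℝ)⁻¹ = log 2 + log (1 - 18437 / 68437) := by
    rw [show (1 - 0.31563 : ℝ)⁻¹ = 2 * (1 - 18437 / 68437) by norm_num,
      log_mul (by norm_num) (by norm_num)]
  rw [binEntropy, hlogA, hlogB]
  linarith [log_two_lt_d9]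

lemma binEntropy_lt_of_lt {p q : ℝ} (hq0 : 0 ≤ q) (hq : q ≤ 2⁻¹) (hpq : p < q) :
    binEntropy p < binEntropy q := by
  rcases lt_or_ge p 0 with hp | hp
  · exact (binEntropy_neg_of_neg hp).trans_le (binEntropy_nonneg hq0 (hq.trans (by norm_num)))
  · exact binEntropy_strictMonoOn ⟨hp, (hpq.trans_le hq).le⟩ ⟨hq0, hq⟩ hpq

lemma binH_eq_binEntropy_div_log_two (x : ℝ) : binH x = binEntropy x / log 2 := by
  rw [binH, binEntropy, logb, logb, log_inv, log_inv]
  ring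

/-- For every `c ∈ (1,2]`, `H((1 − p₁(c))/2) < 0.9`. -/
theorem entropy_lt (c : ℝ) (hc : c ∈ Set.Ioc (1:ℝ) 2) :
    binH ((1 - (erf (c / Real.sqrt 2)
      - Real.sqrt (2 / π) * (1 / c) * (1 - Real.exp (-c ^ 2 / 2)))) / 2) < 0.9 := by
  have hp1 : 0.36874 < p1 c :=
    p1_one_gt.trans (p1_strictMonoOn (mem_Ioi.2 one_pos) (mem_Ioi.2 (one_pos.trans hc.1)) hc.1)
  change binH ((1 - p1 c) / 2) < 0.9
  rw [binH_eq_binEntropy_div_log_two, div_lt_iff₀ (log_pos one_lt_two)]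
  calc binEntropy ((1 - p1 c) / 2) < binEntropy 0.31563 :=
        binEntropy_lt_of_lt (by norm_num) (by norm_num) (by linarith)
    _ < 0.9 * log 2 := binEntropy_lt_nine_tenths_mul_log_two
end

section
/- For every c ∈ (1, 2], it holds that ((p₁(c) − p₂)² / (1 − p₂)) · (log₂ e)/4 ≥ 0.03·(c−1)², where p₁(c) = erf(c/√2) − √(2/π)·(1/c)·(1 − exp(−c²/2)) and p₂ = erf(1/√2) − √(2/π)·(1 − exp(−1/2)). -/
/-!
Put `p(x) = erf(x/√2) − √(2/π)·(1 − e^{−x²/2})/x`, so that `p₁(c) = p(c)` and `p₂ = p(1)`.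
The error-function terms cancel in the derivative: `p'(x) = √(2/π)·(1 − e^{−x²/2})/x²`, and
`(1 − e^{−s})/s` decreases in `s` because it is a secant slope of the convex function `exp`.
So `p` is concave, which gives `p(c) − p(1) ≥ (c − 1)(p(2) − p(1))` on `[1, 2]` and reduces the
claim to numerical bounds on `p(1)` and `p(2)`. Those come from the alternating Taylor bounds
for `exp(−x)`, `x ≥ 0`, integrated termwise against the Gaussian.
-/

open Real

open Set Nat

section TaylorExpNeg

open Finset

theorem hasDerivAt_sum_range_neg_pow_div_factorial (n : ℕ) (x : ℝ) :
    HasDerivAt (fun y : ℝ => ∑ i ∈ range (n + 1), (-y) ^ i / (i ! : ℝ))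
      (-∑ i ∈ range n, (-x) ^ i / (i ! : ℝ)) x := by
  simp_rw [sum_range_succ', pow_zero, factorial_zero, cast_one, div_one, ← sum_neg_distrib]
  refine (HasDerivAt.fun_sum (u := range n) (A := fun i y => (-y) ^ (i + 1) / ((i + 1)! : ℝ))
    fun i _ => ?_).add_const _
  have := ((hasDerivAt_neg x).pow (i + 1)).div_const ((i + 1)! : ℝ)
  refine this.congr_deriv ?_
  push_cast [Nat.factorial_succ]
  field_simp

theorem neg_one_pow_mul_exp_neg_sub_sum_nonneg (n : ℕ) {x : ℝ} (hx : 0 ≤ x) :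
    0 ≤ (-1) ^ n * (exp (-x) - ∑ i ∈ range n, (-x) ^ i / (i ! : ℝ)) := by
  induction n generalizing x with
  | zero => simpa using (exp_pos _).le
  | succ n ih =>
    set F : ℝ → ℝ := fun y =>
      (-1) ^ (n + 1) * (exp (-y) - ∑ i ∈ range (n + 1), (-y) ^ i / (i ! : ℝ))
    have hF : ∀ y,
        HasDerivAt F ((-1) ^ n * (exp (-y) - ∑ i ∈ range n, (-y) ^ i / (i ! : ℝ))) y := fun y =>
      ((((hasDerivAt_neg y).exp).sub (hasDerivAt_sum_range_neg_pow_div_factorial n y)).const_mul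
        ((-1 : ℝ) ^ (n + 1))).congr_deriv (by ring)
    have hmono : MonotoneOn F (Ici 0) :=
      monotoneOn_of_hasDerivWithinAt_nonneg (convex_Ici 0)
        (fun y _ => (hF y).continuousAt.continuousWithinAt) (fun y _ => (hF y).hasDerivWithinAt)
        (fun y hy => ih (interior_subset hy))
    have h0 : F 0 = 0 := by simp [F, sum_range_succ']
    simpa [h0] using hmono self_mem_Ici hx hx

theorem sum_range_le_exp_neg {n : ℕ} (hn : Even n) {x : ℝ} (hx : 0 ≤ x) :
    ∑ i ∈ range n, (-x) ^ i / (i ! : ℝ) ≤ exp (-x) := by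
  simpa [hn.neg_one_pow] using neg_one_pow_mul_exp_neg_sub_sum_nonneg n hx

theorem exp_neg_le_sum_range {n : ℕ} (hn : Odd n) {x : ℝ} (hx : 0 ≤ x) :
    exp (-x) ≤ ∑ i ∈ range n, (-x) ^ i / (i ! : ℝ) := by
  simpa [hn.neg_one_pow] using neg_one_pow_mul_exp_neg_sub_sum_nonneg n hx

theorem integral_sum_range_neg_sq_half_pow (n : ℕ) (a b : ℝ) :
    ∫ x in a..b, ∑ i ∈ range n, (-(x ^ 2 / 2)) ^ i / (i ! : ℝ) =
      ∑ i ∈ range n,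
        (-1 / 2) ^ i / (i ! : ℝ) * ((b ^ (2 * i + 1) - a ^ (2 * i + 1)) / (2 * i + 1)) := by
  rw [intervalIntegral.integral_finsetSum fun i _ =>
    (by fun_prop : Continuous _).intervalIntegrable _ _]
  refine sum_congr rfl fun i _ => ?_
  have h : ∀ x : ℝ, (-(x ^ 2 / 2)) ^ i / (i ! : ℝ) = (-1 / 2) ^ i / (i ! : ℝ) * x ^ (2 * i) := by
    intro x; rw [pow_mul]; ring
  simp_rw [h, intervalIntegral.integral_const_mul, integral_pow]
  push_cast
  ring

theorem sum_le_integral_exp_neg_sq_half {n : ℕ} (hn : Even n) {a b : ℝ} (hab : a ≤ b) :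
    ∑ i ∈ range n,
        (-1 / 2) ^ i / (i ! : ℝ) * ((b ^ (2 * i + 1) - a ^ (2 * i + 1)) / (2 * i + 1)) ≤
      ∫ x in a..b, exp (-x ^ 2 / 2) := by
  rw [← integral_sum_range_neg_sq_half_pow]
  refine intervalIntegral.integral_mono_on hab
    ((by fun_prop : Continuous _).intervalIntegrable _ _)
    ((by fun_prop : Continuous _).intervalIntegrable _ _) fun x _ => ?_
  rw [neg_div]
  exact sum_range_le_exp_neg hn (by positivity)

end TaylorExpNeg

theorem erf_div_sqrt_two (x : ℝ) :
    erf (x / √2) = √(2 / π) * ∫ t in (0:ℝ)..x, exp (-t ^ 2 / 2) := by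
  have hsub : ∫ t in (0:ℝ)..x, exp (-t ^ 2 / 2) = √2 * ∫ t in (0:ℝ)..x / √2, exp (-t ^ 2) := by
    have h := intervalIntegral.integral_comp_div (fun t => exp (-t ^ 2)) (a := 0) (b := x)
      (by positivity : √2 ≠ 0)
    rw [zero_div, smul_eq_mul] at h
    rw [← h]
    congr 1 with t
    rw [div_pow, sq_sqrt zero_le_two, neg_div]
  rw [erf, hsub, sqrt_div zero_le_two]
  field_simp
  rw [sq_sqrt zero_le_two]

/-- The collision probability of the random-line LSH family with window width `w` at distance `r`,
as a function of `x = w / r`. -/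
noncomputable def collisionProb (x : ℝ) : ℝ :=
  erf (x / √2) - √(2 / π) * (1 / x) * (1 - exp (-x ^ 2 / 2))

theorem collisionProb_eq (x : ℝ) :
    collisionProb x =
      √(2 / π) * ((∫ t in (0:ℝ)..x, exp (-t ^ 2 / 2)) - (1 - exp (-x ^ 2 / 2)) / x) := by
  rw [collisionProb, erf_div_sqrt_two]
  ring

theorem hasDerivAt_collisionProb {x : ℝ} (hx : x ≠ 0) :
    HasDerivAt collisionProb (√(2 / π) * ((1 - exp (-x ^ 2 / 2)) / x ^ 2)) x := by
  rw [funext collisionProb_eq]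
  have hint := ((by fun_prop : Continuous fun t : ℝ => exp (-t ^ 2 / 2)).integral_hasStrictDerivAt
    0 x).hasDerivAt
  have hexp : HasDerivAt (fun y : ℝ => 1 - exp (-y ^ 2 / 2)) (exp (-x ^ 2 / 2) * x) x := by
    refine ((((hasDerivAt_pow 2 x).fun_neg.div_const 2).exp).const_sub 1).congr_deriv ?_
    push_cast
    ring
  refine ((hint.sub (hexp.div (hasDerivAt_id x) hx)).const_mul _).congr_deriv ?_
  simp only [id]
  field_simp
  ring

theorem antitoneOn_one_sub_exp_neg_div : AntitoneOn (fun s => (1 - exp (-s)) / s) (Ioi 0) := by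
  intro s hs t ht hst
  have h := convexOn_exp.secant_mono (mem_univ 0) (mem_univ (-t)) (mem_univ (-s))
    (by rw [mem_Ioi] at ht; linarith) (by rw [mem_Ioi] at hs; linarith) (neg_le_neg hst)
  have hslope : ∀ u : ℝ, (exp (-u) - exp 0) / (-u - 0) = (1 - exp (-u)) / u := fun u => by
    rw [exp_zero, sub_zero, div_neg, ← neg_div, neg_sub]
  simpa only [hslope] using h

theorem concaveOn_collisionProb : ConcaveOn ℝ (Ioi 0) collisionProb := by
  have hderiv : ∀ x ∈ Ioi (0:ℝ),
      HasDerivAt collisionProb (√(2 / π) * ((1 - exp (-x ^ 2 / 2)) / x ^ 2)) x :=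
    fun x hx => hasDerivAt_collisionProb (ne_of_gt hx)
  refine AntitoneOn.concaveOn_of_deriv (convex_Ioi 0)
    (fun x hx => (hderiv x hx).continuousAt.continuousWithinAt)
    (by rw [interior_Ioi]; exact fun x hx => (hderiv x hx).differentiableAt.differentiableWithinAt)
    ?_
  rw [interior_Ioi]
  intro x hx y hy hxy
  rw [(hderiv x hx).deriv, (hderiv y hy).deriv]
  rw [mem_Ioi] at hx hy
  have h := antitoneOn_one_sub_exp_neg_div (mem_Ioi.2 (by positivity : 0 < x ^ 2 / 2))
    (mem_Ioi.2 (by positivity : 0 < y ^ 2 / 2)) (by gcongr)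
  have hhalf : ∀ u : ℝ,
      (1 - exp (-u ^ 2 / 2)) / u ^ 2 = (1 - exp (-(u ^ 2 / 2))) / (u ^ 2 / 2) / 2 := by
    intro u; rw [neg_div]; field_simp
  rw [hhalf x, hhalf y]
  gcongr

theorem sub_one_mul_collisionProb_two_sub_le {c : ℝ} (hc : c ∈ Icc (1:ℝ) 2) :
    (c - 1) * (collisionProb 2 - collisionProb 1) ≤ collisionProb c - collisionProb 1 := by
  have h := concaveOn_collisionProb.2 (show (1:ℝ) ∈ Ioi 0 by norm_num)
    (show (2:ℝ) ∈ Ioi 0 by norm_num) (show 0 ≤ 2 - c by linarith [hc.2])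
    (show 0 ≤ c - 1 by linarith [hc.1]) (by ring)
  simp only [smul_eq_mul] at h
  rw [show (2 - c) * 1 + (c - 1) * 2 = c by ring] at h
  linarith

theorem le_sqrt_two_div_pi : 0.79 ≤ √(2 / π) := by
  rw [le_sqrt (by norm_num) (by positivity), le_div_iff₀ pi_pos]
  nlinarith [pi_lt_d2]

theorem sqrt_two_div_pi_lt_one : √(2 / π) < 1 := by
  rw [sqrt_lt' one_pos, div_lt_iff₀ pi_pos]
  linarith [pi_gt_three]

theorem collisionProb_one_ge : 0.36 ≤ collisionProb 1 := by
  have hI := sum_le_integral_exp_neg_sq_half (n := 8) (by decide) zero_le_one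
  have hE := sum_range_le_exp_neg (n := 6) (by decide) (x := 1 / 2) (by norm_num)
  norm_num [Finset.sum_range_succ, factorial] at hI hE
  rw [collisionProb_eq]
  -- naming `√(2 / π)` keeps `norm_num` from splitting it into `√2 / √π`
  set R := √(2 / π)
  norm_num
  nlinarith [le_sqrt_two_div_pi]

theorem collisionProb_one_lt_one : collisionProb 1 < 1 := by
  have hI : ∫ t in (0:ℝ)..1, exp (-t ^ 2 / 2) ≤ 1 := by
    calc _ ≤ ∫ _ in (0:ℝ)..1, (1:ℝ) :=
          intervalIntegral.integral_mono_on zero_le_one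
            ((by fun_prop : Continuous fun t : ℝ => exp (-t ^ 2 / 2)).intervalIntegrable _ _)
            (continuous_const.intervalIntegrable _ _)
            fun t _ => exp_le_one_iff.2 (by nlinarith [sq_nonneg t])
      _ = 1 := by simp
  have hE : exp (-1 / 2) ≤ 1 := exp_le_one_iff.2 (by norm_num)
  rw [collisionProb_eq]
  set R := √(2 / π)
  norm_num
  nlinarith [sqrt_two_div_pi_lt_one, sqrt_nonneg (2 / π)]

theorem collisionProb_two_sub_one_ge : 0.235 ≤ collisionProb 2 - collisionProb 1 := by
  have hI₀₁ := sum_le_integral_exp_neg_sq_half (n := 8) (by decide) zero_le_one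
  have hI₁₂ := sum_le_integral_exp_neg_sq_half (n := 8) (by decide) one_le_two
  have hE₁ := exp_neg_le_sum_range (n := 7) (by decide) (x := 1 / 2) (by norm_num)
  have hE₂ := sum_range_le_exp_neg (n := 10) (by decide) (x := 2) (by norm_num)
  norm_num [Finset.sum_range_succ, factorial] at hI₀₁ hI₁₂ hE₁ hE₂
  rw [collisionProb_eq, collisionProb_eq, ← intervalIntegral.integral_add_adjacent_intervals
    ((by fun_prop : Continuous fun t : ℝ => exp (-t ^ 2 / 2)).intervalIntegrable 0 1)
    ((by fun_prop : Continuous fun t : ℝ => exp (-t ^ 2 / 2)).intervalIntegrable 1 2)]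
  set R := √(2 / π)
  norm_num
  nlinarith [le_sqrt_two_div_pi]

/-- For every `c ∈ (1,2]`, the query-time exponent
`δ = ((p₁(c) − p₂)²/(1 − p₂))·(log₂ e)/4` satisfies `δ ≥ 0.03·(c−1)²`. -/
theorem delta_ge (c : ℝ) (hc : c ∈ Set.Ioc (1:ℝ) 2) :
    ((erf (c / Real.sqrt 2) - Real.sqrt (2 / π) * (1 / c) * (1 - Real.exp (-c ^ 2 / 2))
        - (erf (1 / Real.sqrt 2) - Real.sqrt (2 / π) * (1 - Real.exp (-(1:ℝ) / 2)))) ^ 2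
      / (1 - (erf (1 / Real.sqrt 2) - Real.sqrt (2 / π) * (1 - Real.exp (-(1:ℝ) / 2)))))
      * Real.logb 2 (Real.exp 1) / 4
      ≥ 0.03 * (c - 1) ^ 2 := by
  have hp₂ : erf (1 / √2) - √(2 / π) * (1 - exp (-(1:ℝ) / 2)) = collisionProb 1 := by
    simp [collisionProb]
  rw [hp₂, ← collisionProb]
  have hlog : 1.44 ≤ logb 2 (exp 1) := by
    rw [logb, log_exp, le_div_iff₀ (log_pos one_lt_two)]
    linarith [log_two_lt_d9]
  have hgap : 0.235 * (c - 1) ≤ collisionProb c - collisionProb 1 := by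
    nlinarith [sub_one_mul_collisionProb_two_sub_le (Ioc_subset_Icc_self hc),
      collisionProb_two_sub_one_ge, hc.1]
  have hp₂_lt := collisionProb_one_lt_one
  have hp₂_ge := collisionProb_one_ge
  calc 0.03 * (c - 1) ^ 2 ≤ (0.235 * (c - 1)) ^ 2 / 0.64 * 1.44 / 4 := by
        norm_num; nlinarith [sq_nonneg (c - 1)]
    _ ≤ _ := by gcongr <;> linarith [hc.1]
end
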